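/- A finite simplicial complex K is strong collapsible if and only if there exists n ≥ 1 such that the iterated nerve Nⁿ(K) consists of a single vertex. -/
import Mathlib


/- Theory of strong homotopy types of finite simplicial complexes
   (Barmak–Minian), basic definitions. -/

open Classical

namespace StrongHomotopy

/-- A finite abstract simplicial complex with vertices from the ambient type `V`:
a finite family of nonempty finite subsets of `V`, closed under nonempty subsets.
(All singletons of vertices actually used are faces, by downward closure.) -/
structure Cplx (V : Type) where
  faces : Finset (Finset V)
  nonempty_of_mem : ∀ ⦃σ : Finset V⦄, σ ∈ faces → σ.Nonempty
  down_closed : ∀ ⦃σ τ : Finset V⦄, σ ∈ faces → τ ⊆ σ → τ.Nonempty → τ ∈ faces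

variable {V W : Type}

/-- `v` is a vertex of `K`. -/
def IsVertex (K : Cplx V) (v : V) : Prop := {v} ∈ K.faces

noncomputable section

/-- The set of faces of the link of `v` in `K`. -/
def link (K : Cplx V) (v : V) : Finset (Finset V) :=
  K.faces.filter fun σ => v ∉ σ ∧ insert v σ ∈ K.faces

/-- A family of faces is a simplicial cone with apex `a`. -/
def IsConeWithApex (F : Finset (Finset V)) (a : V) : Prop :=
  {a} ∈ F ∧ ∀ σ ∈ F, insert a σ ∈ F

/-- A family of faces is a simplicial cone. -/
def IsCone (F : Finset (Finset V)) : Prop := ∃ a, IsConeWithApex F a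

/-- `v` is dominated by `v'` in `K`: the link of `v` is a cone with apex `v'`. -/
def DominatedBy (K : Cplx V) (v v' : V) : Prop := IsConeWithApex (link K v) v'

/-- `v` is a dominated vertex of `K`: its link is a simplicial cone. -/
def Dominated (K : Cplx V) (v : V) : Prop := IsCone (link K v)

/-- Deletion `K ∖ v`: the full subcomplex spanned by the vertices other than `v`. -/
def delete (K : Cplx V) (v : V) : Cplx V where
  faces := K.faces.filter fun σ => v ∉ σ
  nonempty_of_mem := fun σ h => K.nonempty_of_mem (Finset.mem_filter.mp h).1
  down_closed := by
    intro σ τ hσ hsub hne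
    rw [Finset.mem_filter] at hσ ⊢
    exact ⟨K.down_closed hσ.1 hsub hne, fun hv => hσ.2 (hsub hv)⟩

/-- The link of a vertex, as a simplicial complex. -/
def linkCplx (K : Cplx V) (v : V) : Cplx V where
  faces := link K v
  nonempty_of_mem := fun σ h => K.nonempty_of_mem (Finset.mem_filter.mp h).1
  down_closed := by
    intro σ τ hσ hsub hne
    simp only [link, Finset.mem_filter] at hσ ⊢
    refine ⟨K.down_closed hσ.1 hsub hne, fun hv => hσ.2.1 (hsub hv), ?_⟩
    exact K.down_closed hσ.2.2 (Finset.insert_subset_insert v hsub)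
      ⟨v, Finset.mem_insert_self v τ⟩

/-- Elementary strong collapse: deletion of a dominated vertex. -/
def ElemStrongCollapse (K L : Cplx V) : Prop := ∃ v, Dominated K v ∧ L = delete K v

/-- `K` strong collapses to `L` (a sequence of elementary strong collapses). -/
def StrongCollapses : Cplx V → Cplx V → Prop := Relation.ReflTransGen ElemStrongCollapse

/-- The complex with a single vertex `v`. -/
def pt (v : V) : Cplx V where
  faces := {{v}}
  nonempty_of_mem := by
    intro σ h
    rw [Finset.mem_singleton] at h
    subst h
    exact ⟨v, Finset.mem_singleton_self v⟩
  down_closed := by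
    intro σ τ hσ hsub hne
    rw [Finset.mem_singleton] at hσ ⊢
    subst hσ
    rcases Finset.subset_singleton_iff.mp hsub with h | h
    · exact absurd h (Finset.nonempty_iff_ne_empty.mp hne)
    · exact h

/-- `K` is strong collapsible: it strong collapses to a single vertex. -/
def StrongCollapsible (K : Cplx V) : Prop := ∃ v, StrongCollapses K (pt v)

/-- A minimal complex: no dominated vertices. -/
def MinimalCplx (K : Cplx V) : Prop := ∀ v, ¬ Dominated K v

/-- A vertex map is simplicial if it sends faces to faces. -/
def IsSimplicial (K : Cplx V) (L : Cplx W) (f : V → W) : Prop :=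
  ∀ σ ∈ K.faces, σ.image f ∈ L.faces

/-- Two vertex maps are contiguous. -/
def Contiguous (K : Cplx V) (L : Cplx W) (f g : V → W) : Prop :=
  ∀ σ ∈ K.faces, σ.image f ∪ σ.image g ∈ L.faces

/-- `f` and `g` lie in the same contiguity class: they are joined by
a finite chain of (pairwise contiguous) maps. -/
def ContigClass (K : Cplx V) (L : Cplx W) : (V → W) → (V → W) → Prop :=
  Relation.ReflTransGen (Contiguous K L)

/-- A strong equivalence of simplicial complexes. -/
def StrongEquiv (K : Cplx V) (L : Cplx W) (f : V → W) : Prop :=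
  IsSimplicial K L f ∧ ∃ g : W → V, IsSimplicial L K g ∧
    ContigClass K K (g ∘ f) id ∧ ContigClass L L (f ∘ g) id

/-- `f` is a simplicial isomorphism from `K` to `L`: a simplicial map,
injective on vertices, inducing a bijection on faces. -/
def IsIsoMap (K : Cplx V) (L : Cplx W) (f : V → W) : Prop :=
  IsSimplicial K L f ∧ Set.InjOn f {v | IsVertex K v} ∧
    K.faces.image (fun σ => σ.image f) = L.faces

/-- `K` and `L` are simplicially isomorphic. -/
def Isomorphic (K : Cplx V) (L : Cplx W) : Prop := ∃ f, IsIsoMap K L f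

/-- `L` is a subcomplex of `K`. -/
def Subcplx (L K : Cplx V) : Prop := L.faces ⊆ K.faces

/-- `L` is a full subcomplex of `K`. -/
def IsFullSub (L K : Cplx V) : Prop :=
  L.faces ⊆ K.faces ∧ ∀ σ ∈ K.faces, (∀ v ∈ σ, IsVertex L v) → σ ∈ L.faces

/-- `K₀` is a core of `K`: a minimal complex to which `K` strong collapses. -/
def IsCore (K K₀ : Cplx V) : Prop := MinimalCplx K₀ ∧ StrongCollapses K K₀

/-- Same strong homotopy type: joined by a finite sequence of strong collapses,
strong expansions and simplicial isomorphisms. (In the abstract setting, where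
new vertices may be created freely, isomorphisms are generated by collapses and
expansions; over a fixed ambient vertex type they must be added as moves.) -/
def SameSHT (K L : Cplx V) : Prop :=
  Relation.ReflTransGen
    (fun A B => ElemStrongCollapse A B ∨ ElemStrongCollapse B A ∨ Isomorphic A B) K L

/-- `K` is vertex-homogeneous: its automorphism group acts transitively on vertices. -/
def VertexHomog (K : Cplx V) : Prop :=
  ∀ v w, IsVertex K v → IsVertex K w → ∃ φ : V → V, IsIsoMap K K φ ∧ φ v = w

/-! ### The nerve -/

/-- The maximal faces of `K`. -/
def maxFaces (K : Cplx V) : Finset (Finset V) :=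
  K.faces.filter fun σ => ∀ τ ∈ K.faces, σ ⊆ τ → σ = τ

/-- The nerve of `K`: vertices are the maximal simplices of `K`; a nonempty set
of maximal simplices is a face iff the simplices have a common vertex. -/
def nerve (K : Cplx V) : Cplx (Finset V) where
  faces := (maxFaces K).powerset.filter fun S => S.Nonempty ∧ ∃ v, ∀ σ ∈ S, v ∈ σ
  nonempty_of_mem := fun S h => (Finset.mem_filter.mp h).2.1
  down_closed := by
    intro S T hS hsub hne
    rw [Finset.mem_filter, Finset.mem_powerset] at hS ⊢
    obtain ⟨hpow, -, v, hv⟩ := hS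
    exact ⟨hsub.trans hpow, hne, v, fun σ hσ => hv σ (hsub hσ)⟩

/-- Iterated ambient vertex types for iterated nerves. -/
def iterV (V : Type) : ℕ → Type := fun n => Nat.rec V (fun _ T => Finset T) n

/-- The iterated nerve `Nⁿ(K)` (with `N⁰(K) = K`). -/
def iterNerve (K : Cplx V) : (n : ℕ) → Cplx (iterV V n)
  | 0 => K
  | n + 1 => nerve (iterNerve K n)

/-- A complex consists of a single vertex. -/
def IsPoint (K : Cplx V) : Prop := ∃ v, K.faces = {{v}}

/-! ### Joins -/

/-- The left part of a set of vertices of `V ⊕ W`. -/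
def lefts (ρ : Finset (V ⊕ W)) : Finset V :=
  ρ.preimage Sum.inl Sum.inl_injective.injOn

/-- The right part of a set of vertices of `V ⊕ W`. -/
def rights (ρ : Finset (V ⊕ W)) : Finset W :=
  ρ.preimage Sum.inr Sum.inr_injective.injOn

lemma lefts_union_rights (ρ : Finset (V ⊕ W)) :
    (lefts ρ).image Sum.inl ∪ (rights ρ).image Sum.inr = ρ := by
  ext x
  cases x with
  | inl v => simp [lefts, rights]
  | inr w => simp [lefts, rights]

lemma lefts_eq (σ : Finset V) (τ : Finset W) :
    lefts (σ.image Sum.inl ∪ τ.image Sum.inr) = σ := by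
  ext v; simp [lefts]

lemma rights_eq (σ : Finset V) (τ : Finset W) :
    rights (σ.image Sum.inl ∪ τ.image Sum.inr) = τ := by
  ext w; simp [rights]

/-- The faces of the join `K * L`. -/
def joinFaces (K : Cplx V) (L : Cplx W) : Finset (Finset (V ⊕ W)) :=
  (((insert ∅ K.faces) ×ˢ (insert ∅ L.faces)).image
    (fun p => p.1.image Sum.inl ∪ p.2.image Sum.inr)).erase ∅

lemma mem_joinFaces {K : Cplx V} {L : Cplx W} {ρ : Finset (V ⊕ W)} :
    ρ ∈ joinFaces K L ↔
      ρ.Nonempty ∧ lefts ρ ∈ insert ∅ K.faces ∧ rights ρ ∈ insert ∅ L.faces := by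
  unfold joinFaces
  constructor
  · intro h
    have hne : ρ ≠ ∅ := Finset.ne_of_mem_erase h
    have h' := Finset.mem_of_mem_erase h
    rw [Finset.mem_image] at h'
    obtain ⟨p, hp, hρ⟩ := h'
    rw [Finset.mem_product] at hp
    subst hρ
    rw [lefts_eq, rights_eq]
    exact ⟨Finset.nonempty_iff_ne_empty.mpr hne, hp.1, hp.2⟩
  · rintro ⟨hne, hl, hr⟩
    apply Finset.mem_erase.mpr
    refine ⟨Finset.nonempty_iff_ne_empty.mp hne, ?_⟩
    rw [Finset.mem_image]
    exact ⟨(lefts ρ, rights ρ), Finset.mem_product.mpr ⟨hl, hr⟩, lefts_union_rights ρ⟩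

/-- The simplicial join `K * L` of complexes with disjoint vertex sets
(realized on the disjoint sum of the ambient types). -/
def join (K : Cplx V) (L : Cplx W) : Cplx (V ⊕ W) where
  faces := joinFaces K L
  nonempty_of_mem := fun ρ h => (mem_joinFaces.mp h).1
  down_closed := by
    intro ρ ρ' hρ hsub hne
    obtain ⟨-, hl, hr⟩ := mem_joinFaces.mp hρ
    apply mem_joinFaces.mpr
    refine ⟨hne, ?_, ?_⟩
    · rcases Finset.eq_empty_or_nonempty (lefts ρ') with h0 | h1
      · rw [h0]; exact Finset.mem_insert_self _ _
      · have hsubl : lefts ρ' ⊆ lefts ρ := by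
          intro v hv
          simp only [lefts, Finset.mem_preimage] at hv ⊢
          exact hsub hv
        have hKf : lefts ρ ∈ K.faces := by
          rcases Finset.mem_insert.mp hl with h | h
          · obtain ⟨v, hv⟩ := h1
            exact absurd (hsubl hv) (by simp [h])
          · exact h
        exact Finset.mem_insert.mpr (Or.inr (K.down_closed hKf hsubl h1))
    · rcases Finset.eq_empty_or_nonempty (rights ρ') with h0 | h1
      · rw [h0]; exact Finset.mem_insert_self _ _
      · have hsubr : rights ρ' ⊆ rights ρ := by
          intro w hw
          simp only [rights, Finset.mem_preimage] at hw ⊢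
          exact hsub hw
        have hLf : rights ρ ∈ L.faces := by
          rcases Finset.mem_insert.mp hr with h | h
          · obtain ⟨w, hw⟩ := h1
            exact absurd (hsubr hw) (by simp [h])
          · exact h
        exact Finset.mem_insert.mpr (Or.inr (L.down_closed hLf hsubr h1))

/-! ### Finite posets (finite T₀-spaces) -/

variable {P : Type} [PartialOrder P]

/-- `x` is a beat point of the finite poset `X`: the points of `X` strictly below
`x` have a maximum, or the points of `X` strictly above `x` have a minimum. -/
def BeatPoint (X : Finset P) (x : P) : Prop :=
  x ∈ X ∧ ((∃ y ∈ X, y < x ∧ ∀ z ∈ X, z < x → z ≤ y) ∨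
    (∃ y ∈ X, x < y ∧ ∀ z ∈ X, x < z → y ≤ z))

/-- Elementary strong collapse of finite posets: removal of a beat point. -/
def ElemPosetStrongCollapse (X Y : Finset P) : Prop :=
  ∃ x, BeatPoint X x ∧ Y = X.erase x

/-- Strong collapse of finite posets: successive removal of beat points. -/
def PosetStrongCollapses : Finset P → Finset P → Prop :=
  Relation.ReflTransGen ElemPosetStrongCollapse

/-- A finite poset is contractible iff it strong collapses to a point (Stong). -/
def PosetContractible (X : Finset P) : Prop := ∃ x, PosetStrongCollapses X {x}

/-- The link `Ĉ_x` of `x` in `X`: the points of `X` comparable with `x` and distinct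
from it. -/
def posetLink (X : Finset P) (x : P) : Finset P :=
  X.filter fun y => y < x ∨ x < y

/-- `x` is a weak point of `X`: its link is contractible. -/
def WeakPoint (X : Finset P) (x : P) : Prop :=
  x ∈ X ∧ PosetContractible (posetLink X x)

/-- Collapse of finite posets: successive removal of weak points. -/
def PosetCollapses : Finset P → Finset P → Prop :=
  Relation.ReflTransGen (fun X Y => ∃ x, WeakPoint X x ∧ Y = X.erase x)

/-- A finite poset is collapsible if it collapses to a point. -/
def PosetCollapsible (X : Finset P) : Prop := ∃ x, PosetCollapses X {x}

/-- The order complex of a finite poset: faces are the nonempty chains. -/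
def orderCplx (X : Finset P) : Cplx P where
  faces := X.powerset.filter fun σ => σ.Nonempty ∧ IsChain (· ≤ ·) (σ : Set P)
  nonempty_of_mem := fun σ h => (Finset.mem_filter.mp h).2.1
  down_closed := by
    intro σ τ hσ hsub hne
    rw [Finset.mem_filter, Finset.mem_powerset] at hσ ⊢
    exact ⟨hsub.trans hσ.1, hne, hσ.2.2.mono (Finset.coe_subset.mpr hsub)⟩

/-- The barycentric subdivision of a complex: the order complex of its poset of
faces (the face poset, ordered by inclusion). -/
def sd (K : Cplx V) : Cplx (Finset V) := orderCplx K.faces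

/-- Homotopy of order-preserving maps between finite posets: being joined by a
fence in the pointwise order. -/
def PosetHomotopic {X Y : Type} [Preorder X] [Preorder Y] (f g : X →o Y) : Prop :=
  Relation.ReflTransGen (fun p q : X →o Y => p ≤ q ∨ q ≤ p) f g

/-- Homotopy equivalence of finite posets. -/
def PosetHomotopyEquiv (X Y : Type) [Preorder X] [Preorder Y] : Prop :=
  ∃ (f : X →o Y) (g : Y →o X),
    PosetHomotopic (g.comp f) OrderHom.id ∧ PosetHomotopic (f.comp g) OrderHom.id

/-! ### Classical collapses and n-collapses -/

/-- Elementary (classical) simplicial collapse: removal of a free face `σ`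
together with the unique face `τ` properly containing it. -/
def ElemCollapse (K L : Cplx V) : Prop :=
  ∃ σ τ : Finset V, σ ∈ K.faces ∧ τ ∈ K.faces ∧ σ ⊂ τ ∧
    (∀ ρ ∈ K.faces, σ ⊂ ρ → ρ = τ) ∧ L.faces = K.faces \ {σ, τ}

/-- Classical simplicial collapse. -/
def Collapses : Cplx V → Cplx V → Prop := Relation.ReflTransGen ElemCollapse

/-- A complex is collapsible if it collapses to a point. -/
def Collapsible (K : Cplx V) : Prop := ∃ v, Collapses K (pt v)

/-- `n`-collapses: a `0`-collapse is a strong collapse; an `(n+1)`-collapse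
successively deletes vertices whose links are `n`-collapsible. -/
def NCollapses : ℕ → Cplx V → Cplx V → Prop
  | 0 => StrongCollapses
  | n + 1 => Relation.ReflTransGen
      (fun K L => ∃ v, (∃ w, NCollapses n (linkCplx K v) (pt w)) ∧ L = delete K v)

/-- `K` is `n`-collapsible: it `n`-collapses to a single vertex. -/
def NCollapsible (n : ℕ) (K : Cplx V) : Prop := ∃ v, NCollapses n K (pt v)

/-- `K` is non-evasive: it is `n`-collapsible for some `n`. -/
def NonEvasive (K : Cplx V) : Prop := ∃ n, NCollapsible n K

end

noncomputable section

/-! ### Auxiliary lemmas for Statement 9 -/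


theorem Cplx.ext' {K L : Cplx V} (h : K.faces = L.faces) : K = L := by
  cases K; cases L; simpa using h

/-- The vertex set of `K` as a `Finset`. -/
def verts (K : Cplx V) : Finset V := K.faces.biUnion id

lemma mem_verts {K : Cplx V} {x : V} : x ∈ verts K ↔ IsVertex K x := by
  simp only [verts, Finset.mem_biUnion, id]
  constructor
  · rintro ⟨σ, hσ, hx⟩
    exact K.down_closed hσ (Finset.singleton_subset_iff.mpr hx) ⟨x, Finset.mem_singleton_self x⟩
  · intro h
    exact ⟨{x}, h, Finset.mem_singleton_self x⟩

lemma face_subset_verts {K : Cplx V} {σ : Finset V} (h : σ ∈ K.faces) : σ ⊆ verts K :=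
  fun x hx => Finset.mem_biUnion.mpr ⟨σ, h, hx⟩

lemma mem_maxFaces {K : Cplx V} {σ : Finset V} :
    σ ∈ maxFaces K ↔ σ ∈ K.faces ∧ ∀ τ ∈ K.faces, σ ⊆ τ → σ = τ := by
  simp [maxFaces]

lemma maxFaces_subset {K : Cplx V} : maxFaces K ⊆ K.faces :=
  fun _ h => (mem_maxFaces.mp h).1

/-- Every face is contained in a maximal face. -/
lemma exists_maxFace {K : Cplx V} {σ : Finset V} (h : σ ∈ K.faces) :
    ∃ τ ∈ maxFaces K, σ ⊆ τ := by
  classical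
  have hne : (K.faces.filter fun τ => σ ⊆ τ).Nonempty :=
    ⟨σ, Finset.mem_filter.mpr ⟨h, Finset.Subset.refl σ⟩⟩
  obtain ⟨τ, hτ, hmax⟩ := Finset.exists_max_image _ (fun τ => τ.card) hne
  rw [Finset.mem_filter] at hτ
  refine ⟨τ, mem_maxFaces.mpr ⟨hτ.1, ?_⟩, hτ.2⟩
  intro ρ hρ hsub
  have hρ' : ρ ∈ K.faces.filter fun τ => σ ⊆ τ :=
    Finset.mem_filter.mpr ⟨hρ, hτ.2.trans hsub⟩
  exact Finset.eq_of_subset_of_card_le hsub (hmax ρ hρ')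

/-- If every maximal face containing `u` contains `w ≠ u`, then `u` is dominated by `w`. -/
lemma dominatedBy_of_maxFaces {K : Cplx V} {u w : V} (huw : u ≠ w) (hu : IsVertex K u)
    (h : ∀ σ ∈ maxFaces K, u ∈ σ → w ∈ σ) : DominatedBy K u w := by
  obtain ⟨m, hm, hum⟩ := exists_maxFace hu
  have humem : u ∈ m := hum (Finset.mem_singleton_self u)
  have hwm : w ∈ m := h m hm humem
  constructor
  · simp only [link, Finset.mem_filter, Finset.mem_singleton]
    refine ⟨K.down_closed (maxFaces_subset hm) ?_ ⟨w, Finset.mem_singleton_self w⟩,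
      fun hc => huw hc, ?_⟩
    · exact Finset.singleton_subset_iff.mpr hwm
    · exact K.down_closed (maxFaces_subset hm)
        (Finset.insert_subset humem (Finset.singleton_subset_iff.mpr hwm))
        ⟨u, Finset.mem_insert_self u _⟩
  · intro σ hσ
    simp only [link, Finset.mem_filter] at hσ ⊢
    obtain ⟨hσf, huσ, hins⟩ := hσ
    obtain ⟨τ, hτ, hsub⟩ := exists_maxFace hins
    have huτ : u ∈ τ := hsub (Finset.mem_insert_self u σ)
    have hwτ : w ∈ τ := h τ hτ huτ
    have hσsubτ : σ ⊆ τ := fun x hx => hsub (Finset.mem_insert_of_mem hx)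
    have hwσsub : insert w σ ⊆ τ := Finset.insert_subset hwτ hσsubτ
    refine ⟨K.down_closed (maxFaces_subset hτ) hwσsub ⟨w, Finset.mem_insert_self w σ⟩,
      fun hc => ?_, ?_⟩
    · rcases Finset.mem_insert.mp hc with h1 | h1
      · exact huw h1
      · exact huσ h1
    · exact K.down_closed (maxFaces_subset hτ)
        (Finset.insert_subset huτ hwσsub) ⟨u, Finset.mem_insert_self u _⟩

/-- If `v` is dominated by `a`, every maximal face containing `v` contains `a`. -/
lemma mem_of_dominatedBy {K : Cplx V} {v a : V} (h : DominatedBy K v a) :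
    ∀ σ ∈ maxFaces K, v ∈ σ → a ∈ σ := by
  intro σ hσ hv
  obtain ⟨ha, hcone⟩ := h
  simp only [link, Finset.mem_filter, Finset.mem_singleton] at ha
  by_contra hanσ
  -- σ.erase v is in the link of v
  have hσf := maxFaces_subset hσ
  by_cases hσv : σ = {v}
  · -- then insert v {a} is a strictly bigger face
    have : insert v ({a} : Finset V) ∈ K.faces := ha.2.2
    have hsub : σ ⊆ insert v {a} := by
      rw [hσv]; exact Finset.singleton_subset_iff.mpr (Finset.mem_insert_self v _)
    have := (mem_maxFaces.mp hσ).2 _ this hsub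
    apply hanσ
    rw [this]
    exact Finset.mem_insert_of_mem (Finset.mem_singleton_self a)
  · have herane : (σ.erase v).Nonempty := by
      obtain ⟨y, hy, hyv⟩ : ∃ y ∈ σ, y ≠ v := by
        by_contra hc
        push_neg at hc
        exact hσv (Finset.eq_singleton_iff_unique_mem.mpr ⟨hv, hc⟩)
      exact ⟨y, Finset.mem_erase.mpr ⟨hyv, hy⟩⟩
    have hlink : σ.erase v ∈ link K v := by
      simp only [link, Finset.mem_filter]
      refine ⟨K.down_closed hσf (Finset.erase_subset v σ) herane,
        Finset.notMem_erase v σ, ?_⟩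
      rw [Finset.insert_erase hv]; exact hσf
    have hlink2 := hcone _ hlink
    simp only [link, Finset.mem_filter] at hlink2
    have hsub : σ ⊆ insert v (insert a (σ.erase v)) := by
      intro x hx
      by_cases hxv : x = v
      · rw [hxv]; exact Finset.mem_insert_self v _
      · exact Finset.mem_insert_of_mem (Finset.mem_insert_of_mem
          (Finset.mem_erase.mpr ⟨hxv, hx⟩))
    have := (mem_maxFaces.mp hσ).2 _ hlink2.2.2 hsub
    apply hanσ
    rw [this]
    exact Finset.mem_insert_of_mem (Finset.mem_insert_self a _)

lemma apex_ne {K : Cplx V} {v a : V} (h : DominatedBy K v a) : v ≠ a := by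
  obtain ⟨ha, -⟩ := h
  simp only [link, Finset.mem_filter, Finset.mem_singleton] at ha
  exact fun hc => ha.2.1 hc

lemma isVertex_of_dominatedBy {K : Cplx V} {v a : V} (h : DominatedBy K v a) :
    IsVertex K v := by
  obtain ⟨ha, -⟩ := h
  simp only [link, Finset.mem_filter, Finset.mem_singleton] at ha
  exact K.down_closed ha.2.2 (by
    intro x hx
    rw [Finset.mem_singleton] at hx
    rw [hx]
    exact Finset.mem_insert_self v _) ⟨v, Finset.mem_singleton_self v⟩


lemma mem_delete {K : Cplx V} {v : V} {σ : Finset V} :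
    σ ∈ (delete K v).faces ↔ σ ∈ K.faces ∧ v ∉ σ := by
  simp [delete]

lemma verts_delete {K : Cplx V} {v : V} : verts (delete K v) = (verts K).erase v := by
  ext x
  simp only [Finset.mem_erase, mem_verts, IsVertex, mem_delete, Finset.mem_singleton]
  constructor
  · rintro ⟨h1, h2⟩
    exact ⟨fun hc => h2 hc.symm, h1⟩
  · rintro ⟨hxv, h⟩
    exact ⟨h, fun hc => hxv hc.symm⟩

/-- Maximal faces of a deletion either were maximal, or become maximal after
re-inserting the deleted vertex. -/
lemma maxFaces_delete {K : Cplx V} {v : V} {σ : Finset V} (h : σ ∈ maxFaces (delete K v)) :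
    σ ∈ maxFaces K ∨ insert v σ ∈ maxFaces K := by
  obtain ⟨hσ, hmax⟩ := mem_maxFaces.mp h
  rw [mem_delete] at hσ
  by_cases hK : σ ∈ maxFaces K
  · exact Or.inl hK
  · right
    obtain ⟨τ, hτ, hsub⟩ := exists_maxFace hσ.1
    have hvτ : v ∈ τ := by
      by_contra hvτ
      have : σ = τ := hmax τ (mem_delete.mpr ⟨maxFaces_subset hτ, hvτ⟩) hsub
      exact hK (this ▸ hτ)
    have h1 : σ ⊆ τ.erase v := fun x hx =>
      Finset.mem_erase.mpr ⟨fun hc => hσ.2 (hc ▸ hx), hsub hx⟩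
    have h2 : τ.erase v ∈ (delete K v).faces := by
      rw [mem_delete]
      refine ⟨K.down_closed (maxFaces_subset hτ) (Finset.erase_subset v τ) ?_,
        Finset.notMem_erase v τ⟩
      exact ⟨_, h1 (K.nonempty_of_mem hσ.1).choose_spec⟩
    have h3 : σ = τ.erase v := hmax _ h2 h1
    rw [h3, Finset.insert_erase hvτ]
    exact hτ

lemma strongCollapses_trans {K L M : Cplx V} (h1 : StrongCollapses K L)
    (h2 : StrongCollapses L M) : StrongCollapses K M :=
  Relation.ReflTransGen.trans h1 h2

lemma sc_of_collapses_sc {K L : Cplx V} (h : StrongCollapses K L) (hL : StrongCollapsible L) :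
    StrongCollapsible K := by
  obtain ⟨w, hw⟩ := hL
  exact ⟨w, strongCollapses_trans h hw⟩

lemma faces_nonempty_of_sc {K : Cplx V} (h : StrongCollapsible K) : K.faces.Nonempty := by
  obtain ⟨w, hw⟩ := h
  induction hw using Relation.ReflTransGen.head_induction_on with
  | refl => exact ⟨{w}, by simp [pt]⟩
  | head hstep _ ih =>
    rename_i A B _
    obtain ⟨v, -, hB⟩ := hstep
    obtain ⟨σ, hσ⟩ := ih
    rw [hB, mem_delete] at hσ
    exact ⟨σ, hσ.1⟩

lemma isPoint_sc {K : Cplx V} (h : IsPoint K) : StrongCollapsible K := by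
  obtain ⟨w, hw⟩ := h
  have : K = pt w := Cplx.ext' (by rw [hw]; rfl)
  exact ⟨w, this ▸ Relation.ReflTransGen.refl⟩

/-- The full subcomplex on a set of vertices. -/
def restrict (K : Cplx V) (Ws : Finset V) : Cplx V where
  faces := K.faces.filter (· ⊆ Ws)
  nonempty_of_mem := fun σ h => K.nonempty_of_mem (Finset.mem_filter.mp h).1
  down_closed := by
    intro σ τ hσ hsub hne
    rw [Finset.mem_filter] at hσ ⊢
    exact ⟨K.down_closed hσ.1 hsub hne, hsub.trans hσ.2⟩

lemma mem_restrict {K : Cplx V} {Ws : Finset V} {σ : Finset V} :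
    σ ∈ (restrict K Ws).faces ↔ σ ∈ K.faces ∧ σ ⊆ Ws := by
  simp [restrict]

/-- The hypothesis for the strong collapse onto a full subcomplex:
every vertex has a "witness" in `Ws` lying in all maximal faces through it. -/
def DomHyp (K : Cplx V) (Ws : Finset V) : Prop :=
  ∀ u ∈ verts K, ∃ w ∈ Ws, ∀ σ ∈ maxFaces K, u ∈ σ → w ∈ σ

lemma domHyp_delete {K : Cplx V} {Ws : Finset V} {u : V} (h : DomHyp K Ws) (hu : u ∉ Ws) :
    DomHyp (delete K u) Ws := by
  intro x hx
  have hx' : x ∈ verts K := by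
    rw [verts_delete] at hx
    exact Finset.mem_of_mem_erase hx
  obtain ⟨w, hwW, hw⟩ := h x hx'
  refine ⟨w, hwW, ?_⟩
  intro σ hσ hxσ
  rcases maxFaces_delete hσ with h1 | h1
  · exact hw σ h1 hxσ
  · have : w ∈ insert u σ := hw _ h1 (Finset.mem_insert_of_mem hxσ)
    rcases Finset.mem_insert.mp this with h2 | h2
    · exact absurd (h2 ▸ hwW) hu
    · exact h2

/-- Lemma Z: `K` strong collapses to the full subcomplex on `Ws`. -/
lemma collapses_to_restrict : ∀ (k : ℕ) (K : Cplx V) (Ws : Finset V),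
    (verts K).card ≤ k → DomHyp K Ws → StrongCollapses K (restrict K Ws) := by
  intro k
  induction k with
  | zero =>
    intro K Ws hcard _
    have hfaces : K.faces = ∅ := by
      rw [Finset.eq_empty_iff_forall_notMem]
      intro σ hσ
      obtain ⟨x, hx⟩ := K.nonempty_of_mem hσ
      have : x ∈ verts K := face_subset_verts hσ hx
      rw [Finset.card_eq_zero.mp (Nat.le_zero.mp hcard)] at this
      exact absurd this (Finset.notMem_empty x)
    have : restrict K Ws = K := Cplx.ext' (by
      rw [Finset.ext_iff]
      intro σ
      rw [mem_restrict, hfaces]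
      simp)
    rw [this]
    exact Relation.ReflTransGen.refl
  | succ k ih =>
    intro K Ws hcard hdom
    by_cases hsub : verts K ⊆ Ws
    · have : restrict K Ws = K := Cplx.ext' (by
        rw [Finset.ext_iff]
        intro σ
        rw [mem_restrict]
        exact ⟨fun h => h.1, fun h => ⟨h, (face_subset_verts h).trans hsub⟩⟩)
      rw [this]
      exact Relation.ReflTransGen.refl
    · obtain ⟨u, huV, huW⟩ := Finset.not_subset.mp hsub
      obtain ⟨w, hwW, hw⟩ := hdom u huV
      have huw : u ≠ w := fun hc => huW (hc ▸ hwW)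
      have hdomBy : DominatedBy K u w := dominatedBy_of_maxFaces huw (mem_verts.mp huV) hw
      have hstep : ElemStrongCollapse K (delete K u) := ⟨u, ⟨w, hdomBy⟩, rfl⟩
      have hrest : restrict (delete K u) Ws = restrict K Ws := Cplx.ext' (by
        rw [Finset.ext_iff]
        intro σ
        rw [mem_restrict, mem_restrict, mem_delete]
        constructor
        · rintro ⟨⟨h1, -⟩, h3⟩; exact ⟨h1, h3⟩
        · rintro ⟨h1, h3⟩
          exact ⟨⟨h1, fun hc => huW (h3 hc)⟩, h3⟩)
      have hcard' : (verts (delete K u)).card ≤ k := by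
        rw [verts_delete]
        have := Finset.card_erase_of_mem huV
        omega
      have := ih (delete K u) Ws hcard' (domHyp_delete hdom huW)
      rw [hrest] at this
      exact Relation.ReflTransGen.head hstep this

lemma mem_nerve {K : Cplx V} {S : Finset (Finset V)} :
    S ∈ (nerve K).faces ↔ S ⊆ maxFaces K ∧ S.Nonempty ∧ ∃ v, ∀ σ ∈ S, v ∈ σ := by
  simp only [nerve, Finset.mem_filter, Finset.mem_powerset, and_assoc]

lemma isVertex_nerve {K : Cplx V} {m : Finset V} :
    IsVertex (nerve K) m ↔ m ∈ maxFaces K := by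
  constructor
  · intro h
    rw [IsVertex, mem_nerve] at h
    exact h.1 (Finset.mem_singleton_self m)
  · intro h
    rw [IsVertex, mem_nerve]
    obtain ⟨x, hx⟩ := K.nonempty_of_mem (maxFaces_subset h)
    refine ⟨Finset.singleton_subset_iff.mpr h, ⟨m, Finset.mem_singleton_self m⟩, x, ?_⟩
    intro σ hσ
    rw [Finset.mem_singleton] at hσ
    exact hσ ▸ hx

lemma verts_nerve {K : Cplx V} : verts (nerve K) = maxFaces K := by
  ext m
  rw [mem_verts, isVertex_nerve]

/-- A maximal face of the nerve containing a family with common vertex `w`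
is the family of *all* maximal faces containing `w`. -/
lemma maxFace_nerve_eq {K : Cplx V} {T : Finset (Finset V)} (hT : T ∈ maxFaces (nerve K))
    {w : V} (hw : ∀ σ ∈ T, w ∈ σ) : T = (maxFaces K).filter (w ∈ ·) := by
  obtain ⟨hTf, hTmax⟩ := mem_maxFaces.mp hT
  obtain ⟨hTsub, hTne, -⟩ := mem_nerve.mp hTf
  apply hTmax
  · rw [mem_nerve]
    obtain ⟨σ0, hσ0⟩ := hTne
    refine ⟨Finset.filter_subset _ _, ⟨σ0, Finset.mem_filter.mpr ⟨hTsub hσ0, hw σ0 hσ0⟩⟩,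
      w, ?_⟩
    intro σ hσ
    exact (Finset.mem_filter.mp hσ).2
  · intro σ hσ
    exact Finset.mem_filter.mpr ⟨hTsub hσ, hw σ hσ⟩

/-- Any face of the nerve has a common vertex; a maximal face of the nerve is
the family of all maximal faces through some vertex. -/
lemma maxFace_nerve_char {K : Cplx V} {T : Finset (Finset V)} (hT : T ∈ maxFaces (nerve K)) :
    ∃ w, IsVertex K w ∧ T = (maxFaces K).filter (w ∈ ·) := by
  obtain ⟨hTsub, hTne, w, hw⟩ := mem_nerve.mp (maxFaces_subset hT)
  obtain ⟨σ0, hσ0⟩ := hTne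
  have hwv : IsVertex K w := by
    have : w ∈ σ0 := hw σ0 hσ0
    exact mem_verts.mp (face_subset_verts (maxFaces_subset (hTsub hσ0)) this)
  exact ⟨w, hwv, maxFace_nerve_eq hT hw⟩

/-- If `v` is dominated by `a`, any maximal face of the nerve is the family of
maximal faces through some vertex `≠ v`. -/
lemma maxFace_nerve_char' {K : Cplx V} {v a : V} (hdom : DominatedBy K v a)
    {T : Finset (Finset V)} (hT : T ∈ maxFaces (nerve K)) :
    ∃ w, w ≠ v ∧ IsVertex K w ∧ T = (maxFaces K).filter (w ∈ ·) := by
  obtain ⟨hTsub, hTne, w, hw⟩ := mem_nerve.mp (maxFaces_subset hT)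
  by_cases hwv : w = v
  · -- every member contains v, hence contains a
    have ha : ∀ σ ∈ T, a ∈ σ := fun σ hσ =>
      mem_of_dominatedBy hdom σ (hTsub hσ) (hwv ▸ hw σ hσ)
    obtain ⟨σ0, hσ0⟩ := hTne
    have hav : IsVertex K a :=
      mem_verts.mp (face_subset_verts (maxFaces_subset (hTsub hσ0)) (ha σ0 hσ0))
    exact ⟨a, (apex_ne hdom).symm, hav, maxFace_nerve_eq hT ha⟩
  · obtain ⟨σ0, hσ0⟩ := hTne
    have hwv' : IsVertex K w :=
      mem_verts.mp (face_subset_verts (maxFaces_subset (hTsub hσ0)) (hw σ0 hσ0))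
    exact ⟨w, hwv, hwv', maxFace_nerve_eq hT hw⟩

lemma nerve_pt {v : V} : nerve (pt v) = pt ({v} : Finset V) := by
  apply Cplx.ext'
  have hmax : maxFaces (pt v) = {{v}} := by
    ext σ
    rw [mem_maxFaces]
    simp only [pt, Finset.mem_singleton]
    constructor
    · rintro ⟨h, -⟩; exact h
    · rintro h
      exact ⟨h, fun τ hτ _ => by rw [h, hτ]⟩
  ext S
  rw [mem_nerve, hmax]
  simp only [pt, Finset.mem_singleton, Finset.subset_singleton_iff]
  constructor
  · rintro ⟨h1 | h1, h2, -⟩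
    · exact absurd h1 (Finset.nonempty_iff_ne_empty.mp h2)
    · exact h1
  · intro h
    subst h
    refine ⟨Or.inr rfl, ⟨{v}, Finset.mem_singleton_self _⟩, v, ?_⟩
    intro σ hσ
    rw [Finset.mem_singleton] at hσ
    exact hσ ▸ Finset.mem_singleton_self v

/-- A complex all of whose faces lie in a single face `m` is strong collapsible. -/
lemma simplex_sc : ∀ (k : ℕ) (K : Cplx V) (m : Finset V), m ∈ K.faces →
    (∀ σ ∈ K.faces, σ ⊆ m) → m.card ≤ k → StrongCollapsible K := by
  intro k
  induction k with
  | zero =>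
    intro K m hm _ hcard
    exact absurd (Finset.card_pos.mpr (K.nonempty_of_mem hm)) (by omega)
  | succ k ih =>
    intro K m hm hall hcard
    by_cases h1 : m.card ≤ 1
    · -- K = pt x
      obtain ⟨x, hx⟩ := Finset.card_eq_one.mp
        (le_antisymm h1 (Finset.card_pos.mpr (K.nonempty_of_mem hm)))
      subst hx
      have : K = pt x := by
        apply Cplx.ext'
        ext σ
        simp only [pt, Finset.mem_singleton]
        constructor
        · intro hσ
          have h2 := hall σ hσ
          rcases Finset.subset_singleton_iff.mp h2 with h3 | h3
          · exact absurd h3 (Finset.nonempty_iff_ne_empty.mp (K.nonempty_of_mem hσ))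
          · exact h3
        · intro h; exact h ▸ hm
      exact ⟨x, this ▸ Relation.ReflTransGen.refl⟩
    · push_neg at h1
      obtain ⟨x, hx, y, hy, hxy⟩ := Finset.one_lt_card.mp h1
      have hmmax : ∀ σ ∈ maxFaces K, σ = m := by
        intro σ hσ
        exact (mem_maxFaces.mp hσ).2 m hm (hall σ (maxFaces_subset hσ))
      have hdom : DominatedBy K x y := by
        apply dominatedBy_of_maxFaces hxy
        · exact mem_verts.mp (face_subset_verts hm hx)
        · intro σ hσ _
          rw [hmmax σ hσ]
          exact hy
      have hstep : ElemStrongCollapse K (delete K x) := ⟨x, ⟨y, hdom⟩, rfl⟩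
      have hrec : StrongCollapsible (delete K x) := by
        apply ih (delete K x) (m.erase x)
        · rw [mem_delete]
          exact ⟨K.down_closed hm (Finset.erase_subset x m)
            ⟨y, Finset.mem_erase.mpr ⟨fun hc => hxy hc.symm, hy⟩⟩,
            Finset.notMem_erase x m⟩
        · intro σ hσ
          rw [mem_delete] at hσ
          exact fun z hz => Finset.mem_erase.mpr ⟨fun hc => hσ.2 (hc ▸ hz), hall σ hσ.1 hz⟩
        · have := Finset.card_erase_of_mem hx
          omega
      obtain ⟨w, hw⟩ := hrec
      exact ⟨w, Relation.ReflTransGen.head hstep hw⟩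

/-- If the nerve is a point, `K` has a unique maximal face, hence is a simplex. -/
lemma sc_of_isPoint_nerve {K : Cplx V} (h : IsPoint (nerve K)) : StrongCollapsible K := by
  obtain ⟨m, hm⟩ := h
  -- m ∈ maxFaces K
  have hmmem : m ∈ maxFaces K := by
    have : ({m} : Finset (Finset V)) ∈ (nerve K).faces := by
      rw [hm]; exact Finset.mem_singleton_self _
    exact (mem_nerve.mp this).1 (Finset.mem_singleton_self m)
  have hall : ∀ σ ∈ K.faces, σ ⊆ m := by
    intro σ hσ
    obtain ⟨τ, hτ, hsub⟩ := exists_maxFace hσ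
    have : ({τ} : Finset (Finset V)) ∈ (nerve K).faces := isVertex_nerve.mpr hτ
    rw [hm, Finset.mem_singleton] at this
    have : τ = m := by
      have := Finset.singleton_injective this
      exact this
    exact this ▸ hsub
  exact simplex_sc m.card K m (maxFaces_subset hmmem) hall le_rfl

lemma apex_isVertex {K : Cplx V} {v a : V} (h : DominatedBy K v a) : IsVertex K a := by
  obtain ⟨ha, -⟩ := h
  rw [link, Finset.mem_filter] at ha
  exact ha.1

section IsoTransport

variable {K : Cplx V} {L : Cplx W} {f : V → W}

lemma iso_image_mem (hf : IsIsoMap K L f) {σ : Finset V} (hσ : σ ∈ K.faces) :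
    σ.image f ∈ L.faces := hf.1 σ hσ

lemma iso_surj_face (hf : IsIsoMap K L f) {ρ : Finset W} (hρ : ρ ∈ L.faces) :
    ∃ σ ∈ K.faces, σ.image f = ρ := by
  have := hf.2.2
  rw [← this, Finset.mem_image] at hρ
  obtain ⟨σ, hσ, hσρ⟩ := hρ
  exact ⟨σ, hσ, hσρ⟩

lemma iso_mem_image_iff (hf : IsIsoMap K L f) {σ : Finset V} (hσ : σ ∈ K.faces)
    {v : V} (hv : IsVertex K v) : f v ∈ σ.image f ↔ v ∈ σ := by
  constructor
  · intro h
    rw [Finset.mem_image] at h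
    obtain ⟨x, hx, hfx⟩ := h
    have hxv : IsVertex K x := mem_verts.mp (face_subset_verts hσ hx)
    have : x = v := hf.2.1 hxv hv hfx
    exact this ▸ hx
  · intro h
    exact Finset.mem_image_of_mem f h

lemma iso_image_subset_reflect (hf : IsIsoMap K L f) {σ τ : Finset V}
    (hσ : σ ∈ K.faces) (hτ : τ ∈ K.faces) (h : σ.image f ⊆ τ.image f) : σ ⊆ τ := by
  intro x hx
  have hxv : IsVertex K x := mem_verts.mp (face_subset_verts hσ hx)
  exact (iso_mem_image_iff hf hτ hxv).mp (h (Finset.mem_image_of_mem f hx))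

lemma iso_image_inj (hf : IsIsoMap K L f) {σ τ : Finset V}
    (hσ : σ ∈ K.faces) (hτ : τ ∈ K.faces) (h : σ.image f = τ.image f) : σ = τ :=
  Finset.Subset.antisymm (iso_image_subset_reflect hf hσ hτ h.le)
    (iso_image_subset_reflect hf hτ hσ h.ge)

lemma iso_isVertex (hf : IsIsoMap K L f) {v : V} (hv : IsVertex K v) :
    IsVertex L (f v) := by
  have := iso_image_mem hf hv
  rw [Finset.image_singleton] at this
  exact this

lemma iso_maxFace (hf : IsIsoMap K L f) {σ : Finset V} (hσ : σ ∈ maxFaces K) :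
    σ.image f ∈ maxFaces L := by
  obtain ⟨hσf, hσmax⟩ := mem_maxFaces.mp hσ
  rw [mem_maxFaces]
  refine ⟨iso_image_mem hf hσf, ?_⟩
  intro ρ hρ hsub
  obtain ⟨τ, hτ, hτρ⟩ := iso_surj_face hf hρ
  subst hτρ
  rw [hσmax τ hτ (iso_image_subset_reflect hf hσf hτ hsub)]

lemma iso_maxFace_surj (hf : IsIsoMap K L f) {ρ : Finset W} (hρ : ρ ∈ maxFaces L) :
    ∃ σ ∈ maxFaces K, σ.image f = ρ := by
  obtain ⟨σ, hσ, hσρ⟩ := iso_surj_face hf (maxFaces_subset hρ)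
  refine ⟨σ, mem_maxFaces.mpr ⟨hσ, ?_⟩, hσρ⟩
  intro τ hτ hsub
  apply iso_image_inj hf hσ hτ
  rw [hσρ]
  exact ((mem_maxFaces.mp hρ).2 _ (iso_image_mem hf hτ)
    (hσρ ▸ Finset.image_subset_image hsub))

lemma iso_dominatedBy (hf : IsIsoMap K L f) {v a : V} (h : DominatedBy K v a) :
    DominatedBy L (f v) (f a) := by
  have hvv : IsVertex K v := isVertex_of_dominatedBy h
  have hav : IsVertex K a := apex_isVertex h
  apply dominatedBy_of_maxFaces
  · intro hc
    exact apex_ne h (hf.2.1 hvv hav hc)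
  · exact iso_isVertex hf hvv
  · intro ρ hρ hvρ
    obtain ⟨σ, hσ, hσρ⟩ := iso_maxFace_surj hf hρ
    subst hσρ
    have : v ∈ σ := (iso_mem_image_iff hf (maxFaces_subset hσ) hvv).mp hvρ
    exact Finset.mem_image_of_mem f (mem_of_dominatedBy h σ hσ this)

lemma iso_delete (hf : IsIsoMap K L f) {v : V} (hv : IsVertex K v) :
    IsIsoMap (delete K v) (delete L (f v)) f := by
  refine ⟨?_, ?_, ?_⟩
  · intro σ hσ
    rw [mem_delete] at hσ
    rw [mem_delete]
    refine ⟨iso_image_mem hf hσ.1, fun hc => ?_⟩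
    exact hσ.2 ((iso_mem_image_iff hf hσ.1 hv).mp hc)
  · intro x hx y hy hxy
    have hx' : IsVertex K x := by
      rw [Set.mem_setOf_eq, IsVertex, mem_delete] at hx
      exact hx.1
    have hy' : IsVertex K y := by
      rw [Set.mem_setOf_eq, IsVertex, mem_delete] at hy
      exact hy.1
    exact hf.2.1 hx' hy' hxy
  · ext ρ
    rw [Finset.mem_image]
    constructor
    · rintro ⟨σ, hσ, hσρ⟩
      rw [mem_delete] at hσ
      rw [mem_delete, ← hσρ]
      refine ⟨iso_image_mem hf hσ.1, fun hc => ?_⟩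
      exact hσ.2 ((iso_mem_image_iff hf hσ.1 hv).mp hc)
    · intro hρ
      rw [mem_delete] at hρ
      obtain ⟨σ, hσ, hσρ⟩ := iso_surj_face hf hρ.1
      refine ⟨σ, ?_, hσρ⟩
      rw [mem_delete]
      refine ⟨hσ, fun hc => ?_⟩
      exact hρ.2 (hσρ ▸ Finset.mem_image_of_mem f hc)

lemma iso_pt {v : V} {D : Cplx W} {g : V → W} (hf : IsIsoMap (pt v) D g) :
    D = pt (g v) := by
  apply Cplx.ext'
  rw [← hf.2.2]
  have : (pt v).faces = {{v}} := rfl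
  rw [this]
  simp [pt]

lemma iso_sc {w : V} (h : StrongCollapses K (pt w)) :
    ∀ {W : Type} {L : Cplx W} {f : V → W}, IsIsoMap K L f → StrongCollapsible L := by
  induction h using Relation.ReflTransGen.head_induction_on with
  | refl =>
    intro W L f hf
    rw [iso_pt hf]
    exact ⟨f w, Relation.ReflTransGen.refl⟩
  | head hstep _ ih =>
    rename_i A B _
    intro W L f hf
    obtain ⟨v, ⟨a, hdom⟩, hB⟩ := hstep
    have hvv : IsVertex A v := isVertex_of_dominatedBy hdom
    have hstep' : ElemStrongCollapse L (delete L (f v)) :=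
      ⟨f v, ⟨f a, iso_dominatedBy hf hdom⟩, rfl⟩
    have hiso : IsIsoMap B (delete L (f v)) f := hB ▸ iso_delete hf hvv
    obtain ⟨w', hw'⟩ := ih hiso
    exact ⟨w', Relation.ReflTransGen.head hstep' hw'⟩

lemma iso_sc' {W : Type} {L : Cplx W} {f : V → W} (hf : IsIsoMap K L f)
    (h : StrongCollapsible K) : StrongCollapsible L := by
  obtain ⟨w, hw⟩ := h
  exact iso_sc hw hf

end IsoTransport

section InstanceAgnostic

variable {A B : Type}

lemma mem_image_any {deq : DecidableEq B} {f : A → B} {s : Finset A} {b : B} :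
    b ∈ @Finset.image A B deq f s ↔ ∃ a ∈ s, f a = b := by
  letI := deq; exact Finset.mem_image

lemma mem_image_of_mem_any {deq : DecidableEq B} {f : A → B} {s : Finset A} {a : A}
    (h : a ∈ s) : f a ∈ @Finset.image A B deq f s := by
  letI := deq; exact Finset.mem_image_of_mem f h

lemma image_nonempty_any {deq : DecidableEq B} {f : A → B} {s : Finset A}
    (h : s.Nonempty) : (@Finset.image A B deq f s).Nonempty := by
  letI := deq; exact h.image f

lemma image_singleton_any {deq : DecidableEq B} {f : A → B} {a : A} :
    @Finset.image A B deq f {a} = {f a} := by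
  letI := deq; exact Finset.image_singleton f a

end InstanceAgnostic

section NerveCollapse

variable {K : Cplx V} {v a : V}

/-- Upgrade a common vertex of a family of maximal faces to one different from
the dominated vertex `v`. -/
lemma common_ne_dominated (hdom : DominatedBy K v a) {S : Finset (Finset V)}
    (hS : ∀ ρ ∈ S, ρ ∈ maxFaces K) (h : ∃ w, ∀ ρ ∈ S, w ∈ ρ) :
    ∃ w, w ≠ v ∧ ∀ ρ ∈ S, w ∈ ρ := by
  obtain ⟨w, hw⟩ := h
  by_cases hwv : w = v
  · refine ⟨a, (apex_ne hdom).symm, ?_⟩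
    intro ρ hρ
    exact mem_of_dominatedBy hdom ρ (hS ρ hρ) (hwv ▸ hw ρ hρ)
  · exact ⟨w, hwv, hw⟩

/-- The transfer map from maximal faces of `K ∖ v` to maximal faces of `K`. -/
def transferMax (K : Cplx V) (v : V) : Finset V → Finset V :=
  fun τ => if τ ∈ maxFaces K then τ else insert v τ

lemma subset_transferMax {τ : Finset V} : τ ⊆ transferMax K v τ := by
  unfold transferMax
  split
  · exact Finset.Subset.refl τ
  · exact Finset.subset_insert v τ

lemma transferMax_mem {τ : Finset V} (hτ : τ ∈ maxFaces (delete K v)) :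
    transferMax K v τ ∈ maxFaces K := by
  unfold transferMax
  split
  · assumption
  · rcases maxFaces_delete hτ with h | h
    · contradiction
    · exact h

lemma notMem_of_delete_face {τ : Finset V} (hτ : τ ∈ (delete K v).faces) : v ∉ τ :=
  (mem_delete.mp hτ).2

lemma transferMax_injOn {τ₁ τ₂ : Finset V} (h1 : τ₁ ∈ maxFaces (delete K v))
    (h2 : τ₂ ∈ maxFaces (delete K v)) (h : transferMax K v τ₁ = transferMax K v τ₂) :
    τ₁ = τ₂ := by
  have hv1 : v ∉ τ₁ := notMem_of_delete_face (maxFaces_subset h1)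
  have hv2 : v ∉ τ₂ := notMem_of_delete_face (maxFaces_subset h2)
  unfold transferMax at h
  split at h <;> split at h
  · exact h
  · exact absurd (h ▸ Finset.mem_insert_self v τ₂) hv1
  · exact absurd (h ▸ Finset.mem_insert_self v τ₁) hv2
  · have := congrArg (Finset.erase · v) h
    simpa [Finset.erase_insert hv1, Finset.erase_insert hv2] using this

/-- The image in `maxFaces K` of the maximal faces of the deletion. -/
def transferSet (K : Cplx V) (v : V) : Finset (Finset V) :=
  (maxFaces (delete K v)).image (transferMax K v)

lemma transferSet_subset : transferSet K v ⊆ maxFaces K := by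
  intro σ hσ
  obtain ⟨τ, hτ, hστ⟩ := Finset.mem_image.mp hσ
  exact hστ ▸ transferMax_mem hτ

lemma mem_transferSet_of_notMem {σ : Finset V} (hσ : σ ∈ maxFaces K) (hv : v ∉ σ) :
    σ ∈ transferSet K v := by
  have hσd : σ ∈ maxFaces (delete K v) := by
    rw [mem_maxFaces]
    refine ⟨mem_delete.mpr ⟨maxFaces_subset hσ, hv⟩, ?_⟩
    intro τ hτ hsub
    exact (mem_maxFaces.mp hσ).2 τ (mem_delete.mp hτ).1 hsub
  refine Finset.mem_image.mpr ⟨σ, hσd, ?_⟩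
  unfold transferMax
  rw [if_pos hσ]

lemma mem_of_not_transferSet (hdom : DominatedBy K v a) {σ : Finset V}
    (hσ : σ ∈ maxFaces K) (hR : σ ∉ transferSet K v) : v ∈ σ ∧ a ∈ σ := by
  have hv : v ∈ σ := by
    by_contra hv
    exact hR (mem_transferSet_of_notMem hσ hv)
  exact ⟨hv, mem_of_dominatedBy hdom σ hσ hv⟩

/-- The dominating vertex for a non-transferred maximal face, inside the
restricted nerve. -/
lemma exists_nerve_dominator (hdom : DominatedBy K v a) {σ : Finset V}
    (hσ : σ ∈ maxFaces K) (hR : σ ∉ transferSet K v) :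
    ∃ g ∈ transferSet K v, g ≠ σ ∧ σ.erase v ⊆ g := by
  obtain ⟨hvσ, haσ⟩ := mem_of_not_transferSet hdom hσ hR
  have herane : (σ.erase v).Nonempty :=
    ⟨a, Finset.mem_erase.mpr ⟨(apex_ne hdom).symm, haσ⟩⟩
  have herface : σ.erase v ∈ (delete K v).faces :=
    mem_delete.mpr ⟨K.down_closed (maxFaces_subset hσ) (Finset.erase_subset v σ) herane,
      Finset.notMem_erase v σ⟩
  obtain ⟨τ, hτ, hsub⟩ := exists_maxFace herface
  refine ⟨transferMax K v τ, Finset.mem_image.mpr ⟨τ, hτ, rfl⟩, ?_,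
    hsub.trans subset_transferMax⟩
  intro hc
  have hvτ : v ∉ τ := notMem_of_delete_face (maxFaces_subset hτ)
  unfold transferMax at hc
  split at hc
  · exact hvτ (hc ▸ hvσ)
  · -- insert v τ = σ, so σ ∈ transferSet
    apply hR
    refine Finset.mem_image.mpr ⟨τ, hτ, ?_⟩
    unfold transferMax
    split
    · contradiction
    · exact hc

lemma delete_restrict_nerve {R' : Finset (Finset V)} {σ : Finset V} :
    delete (restrict (nerve K) R') σ = restrict (nerve K) (R'.erase σ) := by
  apply Cplx.ext'
  ext S
  rw [mem_delete, mem_restrict, mem_restrict]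
  constructor
  · rintro ⟨⟨h1, h2⟩, h3⟩
    exact ⟨h1, fun x hx => Finset.mem_erase.mpr ⟨fun hc => h3 (hc ▸ hx), h2 hx⟩⟩
  · rintro ⟨h1, h2⟩
    exact ⟨⟨h1, fun x hx => Finset.mem_of_mem_erase (h2 hx)⟩,
      fun hc => Finset.notMem_erase σ R' (h2 hc)⟩

/-- In the restricted nerve, a non-transferred maximal face is dominated. -/
lemma nerve_restrict_dominated (hdom : DominatedBy K v a) {R' : Finset (Finset V)}
    (hR'sub : R' ⊆ maxFaces K) (hRR' : transferSet K v ⊆ R') {σ : Finset V}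
    (hσR' : σ ∈ R') (hσR : σ ∉ transferSet K v) :
    ∃ g, DominatedBy (restrict (nerve K) R') σ g := by
  have hσ : σ ∈ maxFaces K := hR'sub hσR'
  obtain ⟨g, hgR, hgσ, hgsub⟩ := exists_nerve_dominator hdom hσ hσR
  refine ⟨g, dominatedBy_of_maxFaces (fun hc => hgσ hc.symm) ?_ ?_⟩
  · rw [IsVertex, mem_restrict]
    exact ⟨isVertex_nerve.mpr hσ, Finset.singleton_subset_iff.mpr hσR'⟩
  · intro S hS hσS
    obtain ⟨hSf, hSmax⟩ := mem_maxFaces.mp hS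
    rw [mem_restrict] at hSf
    obtain ⟨hSn, hSR'⟩ := hSf
    obtain ⟨hSsub, hSne, hcom⟩ := mem_nerve.mp hSn
    obtain ⟨w, hwv, hw⟩ := common_ne_dominated hdom (fun ρ hρ => hSsub hρ) hcom
    -- S is all of R'.filter (w ∈ ·)
    have hS' : R'.filter (w ∈ ·) ∈ (restrict (nerve K) R').faces := by
      rw [mem_restrict]
      refine ⟨mem_nerve.mpr ⟨?_, ⟨σ, Finset.mem_filter.mpr ⟨hσR', hw σ hσS⟩⟩, w, ?_⟩,
        Finset.filter_subset _ _⟩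
      · intro ρ hρ
        exact hR'sub (Finset.mem_filter.mp hρ).1
      · intro ρ hρ
        exact (Finset.mem_filter.mp hρ).2
    have hSeq : S = R'.filter (w ∈ ·) := by
      apply hSmax _ hS'
      intro ρ hρ
      exact Finset.mem_filter.mpr ⟨hSR' hρ, hw ρ hρ⟩
    rw [hSeq]
    refine Finset.mem_filter.mpr ⟨hRR' hgR, ?_⟩
    have : w ∈ σ := hw σ hσS
    exact hgsub (Finset.mem_erase.mpr ⟨hwv, this⟩)

/-- The restricted nerves strong collapse down to the transfer set. -/
lemma nerve_collapses_aux (hdom : DominatedBy K v a) : ∀ (k : ℕ) (R' : Finset (Finset V)),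
    R'.card ≤ k → transferSet K v ⊆ R' → R' ⊆ maxFaces K →
    StrongCollapses (restrict (nerve K) R') (restrict (nerve K) (transferSet K v)) := by
  intro k
  induction k with
  | zero =>
    intro R' hcard hsub1 _
    have : R' = ∅ := Finset.card_eq_zero.mp (Nat.le_zero.mp hcard)
    have hRempty : transferSet K v = ∅ :=
      Finset.subset_empty.mp (this ▸ hsub1)
    rw [this, hRempty]
    exact Relation.ReflTransGen.refl
  | succ k ih =>
    intro R' hcard hsub1 hsub2
    by_cases heq : R' ⊆ transferSet K v
    · rw [Finset.Subset.antisymm heq hsub1]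
      exact Relation.ReflTransGen.refl
    · obtain ⟨σ, hσR', hσR⟩ := Finset.not_subset.mp heq
      obtain ⟨g, hg⟩ := nerve_restrict_dominated hdom hsub2 hsub1 hσR' hσR
      have hstep : ElemStrongCollapse (restrict (nerve K) R')
          (restrict (nerve K) (R'.erase σ)) :=
        ⟨σ, ⟨g, hg⟩, delete_restrict_nerve.symm ▸ delete_restrict_nerve⟩
      have hrec := ih (R'.erase σ)
        (by have := Finset.card_erase_of_mem hσR'; omega)
        (fun x hx => Finset.mem_erase.mpr ⟨fun hc => hσR (hc ▸ hx), hsub1 hx⟩)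
        ((Finset.erase_subset σ R').trans hsub2)
      exact Relation.ReflTransGen.head hstep hrec

lemma nerve_eq_restrict_maxFaces : nerve K = restrict (nerve K) (maxFaces K) := by
  apply Cplx.ext'
  ext S
  rw [mem_restrict]
  constructor
  · intro h
    exact ⟨h, (mem_nerve.mp h).1⟩
  · exact fun h => h.1

/-- The transfer map is an isomorphism from the nerve of the deletion onto the
restriction of the nerve to the transfer set. -/
lemma transfer_iso (hdom : DominatedBy K v a) :
    IsIsoMap (nerve (delete K v)) (restrict (nerve K) (transferSet K v))
      (transferMax K v) := by
  refine ⟨?_, ?_, ?_⟩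
  · -- simplicial
    intro S hS
    obtain ⟨hSsub, hSne, w, hw⟩ := mem_nerve.mp hS
    rw [mem_restrict]
    constructor
    · rw [mem_nerve]
      refine ⟨?_, image_nonempty_any hSne, w, ?_⟩
      · intro ρ hρ
        obtain ⟨τ, hτ, hτρ⟩ := mem_image_any.mp hρ
        exact hτρ ▸ transferMax_mem (hSsub hτ)
      · intro ρ hρ
        obtain ⟨τ, hτ, hτρ⟩ := mem_image_any.mp hρ
        exact hτρ ▸ subset_transferMax (hw τ hτ)
    · intro ρ hρ
      obtain ⟨τ, hτ, hτρ⟩ := mem_image_any.mp hρ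
      exact hτρ ▸ mem_image_any.mpr ⟨τ, hSsub hτ, rfl⟩
  · -- injective on vertices
    intro S1 hS1 S2 hS2 h
    rw [Set.mem_setOf_eq, isVertex_nerve] at hS1 hS2
    exact transferMax_injOn hS1 hS2 h
  · -- image of faces
    ext S'
    rw [mem_image_any]
    constructor
    · rintro ⟨S, hS, hSS'⟩
      subst hSS'
      obtain ⟨hSsub, hSne, w, hw⟩ := mem_nerve.mp hS
      rw [mem_restrict]
      constructor
      · rw [mem_nerve]
        refine ⟨?_, image_nonempty_any hSne, w, ?_⟩
        · intro ρ hρ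
          obtain ⟨τ, hτ, hτρ⟩ := mem_image_any.mp hρ
          exact hτρ ▸ transferMax_mem (hSsub hτ)
        · intro ρ hρ
          obtain ⟨τ, hτ, hτρ⟩ := mem_image_any.mp hρ
          exact hτρ ▸ subset_transferMax (hw τ hτ)
      · intro ρ hρ
        obtain ⟨τ, hτ, hτρ⟩ := mem_image_any.mp hρ
        exact hτρ ▸ mem_image_any.mpr ⟨τ, hSsub hτ, rfl⟩
    · intro hS'
      rw [mem_restrict] at hS'
      obtain ⟨hS'n, hS'R⟩ := hS'
      obtain ⟨hS'sub, hS'ne, hcom⟩ := mem_nerve.mp hS'n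
      obtain ⟨w, hwv, hw⟩ := common_ne_dominated hdom (fun ρ hρ => hS'sub hρ) hcom
      refine ⟨(maxFaces (delete K v)).filter (fun τ => transferMax K v τ ∈ S'), ?_, ?_⟩
      · rw [mem_nerve]
        refine ⟨Finset.filter_subset _ _, ?_, w, ?_⟩
        · obtain ⟨ρ, hρ⟩ := hS'ne
          obtain ⟨τ, hτ, hτρ⟩ := Finset.mem_image.mp (hS'R hρ)
          exact ⟨τ, Finset.mem_filter.mpr ⟨hτ, hτρ.symm ▸ hρ⟩⟩
        · intro τ hτ
          rw [Finset.mem_filter] at hτ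
          have hwρ : w ∈ transferMax K v τ := hw _ hτ.2
          have hvτ : v ∉ τ := notMem_of_delete_face (maxFaces_subset hτ.1)
          unfold transferMax at hwρ
          split at hwρ
          · exact hwρ
          · rcases Finset.mem_insert.mp hwρ with h | h
            · exact absurd h hwv
            · exact h
      · ext ρ
        rw [mem_image_any]
        constructor
        · rintro ⟨τ, hτ, hτρ⟩
          rw [Finset.mem_filter] at hτ
          exact hτρ ▸ hτ.2
        · intro hρ
          obtain ⟨τ, hτ, hτρ⟩ := Finset.mem_image.mp (hS'R hρ)
          exact ⟨τ, Finset.mem_filter.mpr ⟨hτ, hτρ.symm ▸ hρ⟩, hτρ⟩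

/-- Lemma X: strong collapsibility passes to the nerve. -/
lemma sc_nerve {w : V} (h : StrongCollapses K (pt w)) : StrongCollapsible (nerve K) := by
  induction h using Relation.ReflTransGen.head_induction_on with
  | refl =>
    rw [nerve_pt]
    exact ⟨{w}, Relation.ReflTransGen.refl⟩
  | head hstep _ ih =>
    rename_i A B _
    obtain ⟨u, ⟨b, hdom⟩, hB⟩ := hstep
    subst hB
    have hcoll : StrongCollapses (nerve A) (restrict (nerve A) (transferSet A u)) := by
      have := nerve_collapses_aux hdom (maxFaces A).card (maxFaces A) le_rfl
        transferSet_subset (Finset.Subset.refl _)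
      rw [← nerve_eq_restrict_maxFaces] at this
      exact this
    have hsc : StrongCollapsible (restrict (nerve A) (transferSet A u)) :=
      iso_sc' (transfer_iso hdom) ih
    exact sc_of_collapses_sc hcoll hsc

lemma sc_nerve' (h : StrongCollapsible K) : StrongCollapsible (nerve K) := by
  obtain ⟨w, hw⟩ := h
  exact sc_nerve hw

end NerveCollapse

section MainAssembly

/-- Choice of a defining vertex for a maximal face of the nerve. -/
def nerveChoice (K : Cplx V) (u₀ : V) : Finset (Finset V) → V :=
  fun T => if h : ∃ w, IsVertex K w ∧ T = (maxFaces K).filter (w ∈ ·) then h.choose else u₀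

lemma nerveChoice_spec {K : Cplx V} {u₀ : V} {T : Finset (Finset V)}
    (hT : T ∈ maxFaces (nerve K)) :
    IsVertex K (nerveChoice K u₀ T) ∧ T = (maxFaces K).filter ((nerveChoice K u₀ T) ∈ ·) := by
  obtain ⟨w, hw⟩ := maxFace_nerve_char hT
  have hP : ∃ w, IsVertex K w ∧ T = (maxFaces K).filter (w ∈ ·) := ⟨w, hw⟩
  rw [nerveChoice, dif_pos hP]
  exact hP.choose_spec

/-- Lemma Y: if the nerve is strong collapsible, so is `K`. -/
lemma sc_of_sc_nerve {K : Cplx V} (h : StrongCollapsible (nerve K)) :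
    StrongCollapsible K := by
  -- K is nonempty, get a junk vertex
  obtain ⟨S0, hS0⟩ := faces_nonempty_of_sc h
  obtain ⟨hS0sub, hS0ne, -⟩ := mem_nerve.mp hS0
  obtain ⟨m0, hm0⟩ := hS0ne
  obtain ⟨u₀, hu₀⟩ := K.nonempty_of_mem (maxFaces_subset (hS0sub hm0))
  -- the domination hypothesis
  have hdomhyp : DomHyp K ((maxFaces (nerve K)).image (nerveChoice K u₀)) := by
    intro u hu
    have huv : IsVertex K u := mem_verts.mp hu
    obtain ⟨m, hm, hum⟩ := exists_maxFace huv
    have hSu : (maxFaces K).filter (u ∈ ·) ∈ (nerve K).faces := by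
      rw [mem_nerve]
      exact ⟨Finset.filter_subset _ _,
        ⟨m, Finset.mem_filter.mpr ⟨hm, hum (Finset.mem_singleton_self u)⟩⟩,
        u, fun σ hσ => (Finset.mem_filter.mp hσ).2⟩
    obtain ⟨T, hT, hsubT⟩ := exists_maxFace hSu
    refine ⟨nerveChoice K u₀ T, Finset.mem_image_of_mem (nerveChoice K u₀) hT, ?_⟩
    intro σ hσ huσ
    have : σ ∈ T := hsubT (Finset.mem_filter.mpr ⟨hσ, huσ⟩)
    rw [(nerveChoice_spec (u₀ := u₀) hT).2] at this
    exact (Finset.mem_filter.mp this).2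
  -- the isomorphism from the double nerve
  have hiso : IsIsoMap (nerve (nerve K)) (restrict K ((maxFaces (nerve K)).image (nerveChoice K u₀))) (nerveChoice K u₀) := by
    refine ⟨?_, ?_, ?_⟩
    · intro S hS
      obtain ⟨hSsub, hSne, σc, hσc⟩ := mem_nerve.mp hS
      obtain ⟨T0, hT0⟩ := hSne
      have hσcmax : σc ∈ maxFaces K := by
        have := hσc T0 hT0
        rw [(nerveChoice_spec (u₀ := u₀) (hSsub hT0)).2] at this
        exact (Finset.mem_filter.mp this).1
      have himgsub : ∀ x ∈ S.image (nerveChoice K u₀), x ∈ σc := by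
        intro x hx
        obtain ⟨T, hT, hTx⟩ := mem_image_any.mp hx
        have := hσc T hT
        rw [(nerveChoice_spec (u₀ := u₀) (hSsub hT)).2] at this
        exact hTx ▸ (Finset.mem_filter.mp this).2
      rw [mem_restrict]
      constructor
      · exact K.down_closed (maxFaces_subset hσcmax) himgsub
          (image_nonempty_any ⟨T0, hT0⟩)
      · intro x hx
        obtain ⟨T, hT, hTx⟩ := mem_image_any.mp hx
        exact hTx ▸ Finset.mem_image_of_mem (nerveChoice K u₀) (hSsub hT)
    · intro T1 hT1 T2 hT2 hceq
      rw [Set.mem_setOf_eq, isVertex_nerve] at hT1 hT2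
      rw [(nerveChoice_spec (u₀ := u₀) hT1).2, (nerveChoice_spec (u₀ := u₀) hT2).2, hceq]
    · ext τ
      rw [mem_image_any]
      constructor
      · rintro ⟨S, hS, hSτ⟩
        subst hSτ
        obtain ⟨hSsub, hSne, σc, hσc⟩ := mem_nerve.mp hS
        obtain ⟨T0, hT0⟩ := hSne
        have hσcmax : σc ∈ maxFaces K := by
          have := hσc T0 hT0
          rw [(nerveChoice_spec (u₀ := u₀) (hSsub hT0)).2] at this
          exact (Finset.mem_filter.mp this).1
        have himgsub : ∀ x ∈ S.image (nerveChoice K u₀), x ∈ σc := by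
          intro x hx
          obtain ⟨T, hT, hTx⟩ := mem_image_any.mp hx
          have := hσc T hT
          rw [(nerveChoice_spec (u₀ := u₀) (hSsub hT)).2] at this
          exact hTx ▸ (Finset.mem_filter.mp this).2
        rw [mem_restrict]
        constructor
        · exact K.down_closed (maxFaces_subset hσcmax) himgsub
            (image_nonempty_any ⟨T0, hT0⟩)
        · intro x hx
          obtain ⟨T, hT, hTx⟩ := mem_image_any.mp hx
          exact hTx ▸ Finset.mem_image_of_mem (nerveChoice K u₀) (hSsub hT)
      · intro hτ
        rw [mem_restrict] at hτ
        obtain ⟨hτf, hτW⟩ := hτ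
        obtain ⟨σc, hσcmax, hτσc⟩ := exists_maxFace hτf
        refine ⟨(maxFaces (nerve K)).filter (fun T => nerveChoice K u₀ T ∈ τ), ?_, ?_⟩
        · rw [mem_nerve]
          refine ⟨Finset.filter_subset _ _, ?_, σc, ?_⟩
          · obtain ⟨x, hx⟩ := K.nonempty_of_mem hτf
            obtain ⟨T0, hT0, hT0x⟩ := Finset.mem_image.mp (hτW hx)
            exact ⟨T0, Finset.mem_filter.mpr ⟨hT0, hT0x.symm ▸ hx⟩⟩
          · intro T hT
            rw [Finset.mem_filter] at hT
            rw [(nerveChoice_spec (u₀ := u₀) hT.1).2]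
            exact Finset.mem_filter.mpr ⟨hσcmax, hτσc hT.2⟩
        · ext x
          rw [mem_image_any]
          constructor
          · rintro ⟨T, hT, hTx⟩
            exact hTx ▸ (Finset.mem_filter.mp hT).2
          · intro hx
            obtain ⟨T0, hT0, hT0x⟩ := Finset.mem_image.mp (hτW hx)
            exact ⟨T0, Finset.mem_filter.mpr ⟨hT0, hT0x.symm ▸ hx⟩, hT0x⟩
  have hcoll : StrongCollapses K (restrict K ((maxFaces (nerve K)).image (nerveChoice K u₀))) :=
    collapses_to_restrict (verts K).card K ((maxFaces (nerve K)).image (nerveChoice K u₀)) le_rfl hdomhyp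
  have hsc2 : StrongCollapsible (nerve (nerve K)) := sc_nerve' h
  exact sc_of_collapses_sc hcoll (iso_sc' hiso hsc2)

/-- Choice used for the counting argument. -/
def nerveChoice2 (K : Cplx V) (v a : V) : Finset (Finset V) → V :=
  fun T => if h : ∃ w, w ≠ v ∧ IsVertex K w ∧ T = (maxFaces K).filter (w ∈ ·) then
    h.choose else a

lemma nerveChoice2_spec {K : Cplx V} {v a : V} (hdom : DominatedBy K v a)
    {T : Finset (Finset V)} (hT : T ∈ maxFaces (nerve K)) :
    (nerveChoice2 K v a T) ≠ v ∧ IsVertex K (nerveChoice2 K v a T) ∧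
      T = (maxFaces K).filter ((nerveChoice2 K v a T) ∈ ·) := by
  obtain ⟨w, hw⟩ := maxFace_nerve_char' hdom hT
  have hP : ∃ w, w ≠ v ∧ IsVertex K w ∧ T = (maxFaces K).filter (w ∈ ·) := ⟨w, hw⟩
  rw [nerveChoice2, dif_pos hP]
  exact hP.choose_spec

/-- Counting: if `K` has a dominated vertex, the double nerve has fewer vertices. -/
lemma card_verts_nerve2_lt {K : Cplx V} {v a : V} (hdom : DominatedBy K v a) :
    (verts (nerve (nerve K))).card < (verts K).card := by
  have h1 : verts (nerve (nerve K)) = maxFaces (nerve K) := verts_nerve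
  have hvV : v ∈ verts K := mem_verts.mpr (isVertex_of_dominatedBy hdom)
  have hinj : ∀ T ∈ maxFaces (nerve K), nerveChoice2 K v a T ∈ (verts K).erase v := by
    intro T hT
    obtain ⟨h2, h3, -⟩ := nerveChoice2_spec hdom hT
    exact Finset.mem_erase.mpr ⟨h2, mem_verts.mpr h3⟩
  have hcard : (maxFaces (nerve K)).card ≤ ((verts K).erase v).card := by
    apply Finset.card_le_card_of_injOn (nerveChoice2 K v a) hinj
    intro T1 hT1 T2 hT2 heq
    rw [(nerveChoice2_spec hdom hT1).2.2, (nerveChoice2_spec hdom hT2).2.2, heq]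
  rw [h1]
  have := Finset.card_erase_of_mem hvV
  have hpos : 0 < (verts K).card := Finset.card_pos.mpr ⟨v, hvV⟩
  omega

/-! ### Re-basing iterated nerves -/

lemma iterV_shift (V : Type) : ∀ n, iterV (Finset V) n = iterV V (n + 1)
  | 0 => rfl
  | n + 1 => congrArg Finset (iterV_shift V n)

lemma heq_nerve {A B : Type} (e : A = B) {x : Cplx A} {y : Cplx B} (h : HEq x y) :
    HEq (nerve x) (nerve y) := by
  subst e
  rw [eq_of_heq h]

lemma iterNerve_shift (K : Cplx V) : ∀ n, HEq (iterNerve (nerve K) n) (iterNerve K (n + 1))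
  | 0 => HEq.rfl
  | n + 1 => heq_nerve (iterV_shift V n) (iterNerve_shift K n)

lemma isPoint_transfer {A B : Type} (e : A = B) {x : Cplx A} {y : Cplx B} (h : HEq x y) :
    IsPoint x ↔ IsPoint y := by
  subst e
  rw [eq_of_heq h]

lemma isPoint_iterNerve_shift {K : Cplx V} {n : ℕ} :
    IsPoint (iterNerve (nerve K) n) ↔ IsPoint (iterNerve K (n + 1)) :=
  isPoint_transfer (iterV_shift V n) (iterNerve_shift K n)

lemma iterNerve_one (K : Cplx V) : iterNerve K 1 = nerve K := rfl

/-- Forward direction: a strong collapsible complex has a one-point iterated nerve. -/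
lemma sc_to_point : ∀ (k : ℕ), ∀ {V : Type} (K : Cplx V), (verts K).card ≤ k →
    StrongCollapsible K → ∃ n, 1 ≤ n ∧ IsPoint (iterNerve K n) := by
  intro k
  induction k using Nat.strong_induction_on with
  | _ k ih =>
    intro V K hcard hsc
    obtain ⟨w, hw⟩ := hsc
    rcases Relation.ReflTransGen.cases_head hw with heq | ⟨B, hstep, hchain⟩
    · refine ⟨1, le_rfl, ?_⟩
      have hp : IsPoint (nerve K) := by
        rw [heq, nerve_pt]
        exact ⟨{w}, rfl⟩
      exact hp
    · obtain ⟨u, ⟨b, hdom⟩, -⟩ := hstep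
      have hlt : (verts (nerve (nerve K))).card < (verts K).card :=
        card_verts_nerve2_lt hdom
      have hsc2 : StrongCollapsible (nerve (nerve K)) := sc_nerve' (sc_nerve' ⟨w, hw⟩)
      obtain ⟨m, hm1, hmpt⟩ := ih (verts (nerve (nerve K))).card
        (lt_of_lt_of_le hlt hcard) (nerve (nerve K)) le_rfl hsc2
      refine ⟨m + 2, by omega, ?_⟩
      have h1 : IsPoint (iterNerve (nerve K) (m + 1)) :=
        isPoint_iterNerve_shift.mp hmpt
      exact isPoint_iterNerve_shift.mp h1

/-- Backward direction: a one-point iterated nerve forces strong collapsibility. -/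
lemma point_to_sc : ∀ (n : ℕ), ∀ {V : Type} (K : Cplx V),
    IsPoint (iterNerve K (n + 1)) → StrongCollapsible K := by
  intro n
  induction n with
  | zero =>
    intro V K h
    rw [iterNerve_one] at h
    exact sc_of_isPoint_nerve h
  | succ n ihn =>
    intro V K h
    have h1 : IsPoint (iterNerve (nerve K) (n + 1)) := isPoint_iterNerve_shift.mpr h
    exact sc_of_sc_nerve (ihn (nerve K) h1)

end MainAssembly

end

/-- `K` is strong collapsible iff some iterated nerve `Nⁿ(K)`,
`n ≥ 1`, is a single point. -/
theorem stmt9 {V : Type} (K : Cplx V) :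
    StrongCollapsible K ↔ ∃ n : ℕ, 1 ≤ n ∧ IsPoint (iterNerve K n) := by
  constructor
  · intro h
    exact sc_to_point (verts K).card K le_rfl h
  · rintro ⟨n, hn1, hpt⟩
    obtain ⟨m, rfl⟩ : ∃ m, n = m + 1 := ⟨n - 1, by omega⟩
    exact point_to_sc m K hpt

end StrongHomotopy
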